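/- For the rational map R₂(z) = 2/(z² + 2z) on the Riemann sphere, the critical points are −1 and ∞, and the critical orbits satisfy R₂(−1) = −2, R₂(−2) = ∞, R₂(∞) = 0 and R₂(0) = ∞. Consequently the postcritical set of R₂ is exactly {−2, ∞, 0}. -/

import Mathlib

open OnePoint

/-- The capture map `R₂(z) = 2/(z² + 2z)` as a self-map of the Riemann sphere. -/
noncomputable def R2 : OnePoint ℂ → OnePoint ℂ := fun z =>
  match (z : Option ℂ) with
  | Option.none => ((0 : ℂ) : OnePoint ℂ)
  | Option.some w => if w ^ 2 + 2 * w = 0 then ∞ else (((2 / (w ^ 2 + 2 * w)) : ℂ) : OnePoint ℂ)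

/-- A point is critical for `f` if `f` fails to be locally injective there. -/
def IsCriticalPt (f : OnePoint ℂ → OnePoint ℂ) (c : OnePoint ℂ) : Prop :=
  ¬ ∃ U ∈ nhds c, Set.InjOn f U

/-!
Off its poles `R₂ z = 2 / q z` with `q z = z² + 2z = (z + 1)² - 1`, so `R₂ z = R₂ w` exactly when
`w = z` or `w = -2 - z`. The reflection `z ↦ -2 - z` fixes `-1` and `∞`, so every neighbourhood of
either point contains two distinct points with the same image. Around any other point `c`, the ball
of radius `dist c (-1)` is convex and misses `-1`, hence contains no pair `z, -2 - z` (their midpoint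
is `-1`), and `R₂` is injective on it. The critical orbits land in `{-2, ∞, 0}`, which `R₂` maps
into itself.
-/

open Filter Set Topology Bornology

def postcriticalSet (f : OnePoint ℂ → OnePoint ℂ) : Set (OnePoint ℂ) :=
  {p | ∃ c, IsCriticalPt f c ∧ ∃ k, 1 ≤ k ∧ f^[k] c = p}

lemma isCriticalPt_of_tendsto {ι : Type*} {l : Filter ι} [l.NeBot] {f : OnePoint ℂ → OnePoint ℂ}
    {c : OnePoint ℂ} {x y : ι → OnePoint ℂ} (hx : Tendsto x l (𝓝 c)) (hy : Tendsto y l (𝓝 c))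
    (hne : ∀ᶠ i in l, x i ≠ y i) (heq : ∀ i, f (x i) = f (y i)) : IsCriticalPt f c := by
  rintro ⟨U, hU, hinj⟩
  obtain ⟨i, hxU, hyU, hxy⟩ :=
    ((hx.eventually_mem hU).and ((hy.eventually_mem hU).and hne)).exists
  exact hxy (hinj hxU hyU (heq i))

lemma iterate_mem_of_mapsTo {α : Type*} {f : α → α} {s : Set α} (hs : MapsTo f s s) {c : α}
    (hc : f c ∈ s) {k : ℕ} (hk : 1 ≤ k) : f^[k] c ∈ s := by
  obtain ⟨k, rfl⟩ := Nat.exists_eq_add_of_le' hk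
  rw [Function.iterate_succ_apply]
  exact hs.iterate k hc

lemma OnePoint.tendsto_coe_cobounded : Tendsto ((↑) : ℂ → OnePoint ℂ) (cobounded ℂ) (𝓝 ∞) := by
  simpa [Metric.cobounded_eq_cocompact] using OnePoint.tendsto_coe_infty (X := ℂ)

lemma R2_coe (w : ℂ) :
    R2 w = if w ^ 2 + 2 * w = 0 then ∞ else ((2 / (w ^ 2 + 2 * w) : ℂ) : OnePoint ℂ) :=
  rfl

lemma R2_infty : R2 ∞ = ((0 : ℂ) : OnePoint ℂ) := rfl

lemma R2_neg_one : R2 ((-1 : ℂ) : OnePoint ℂ) = ((-2 : ℂ) : OnePoint ℂ) := by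
  rw [R2_coe]; norm_num

lemma R2_neg_two : R2 ((-2 : ℂ) : OnePoint ℂ) = ∞ := by
  rw [R2_coe]; norm_num

lemma R2_zero : R2 ((0 : ℂ) : OnePoint ℂ) = ∞ := by
  rw [R2_coe]; norm_num

lemma R2_coe_eq_R2_coe_iff {w u : ℂ} : R2 w = R2 u ↔ u = w ∨ u = -2 - w := by
  have hq : R2 w = R2 u ↔ w ^ 2 + 2 * w = u ^ 2 + 2 * u := by
    simp only [R2_coe]
    split_ifs <;> simp_all [eq_comm (a := (0 : ℂ)), div_eq_mul_inv]
  rw [hq, ← sub_eq_zero, ← sub_eq_zero (a := u), ← sub_eq_zero (a := u) (b := -2 - w),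
    ← mul_eq_zero]
  constructor <;> intro h <;> linear_combination -h

lemma R2_neg_two_sub (w : ℂ) : R2 w = R2 ((-2 - w : ℂ) : OnePoint ℂ) :=
  R2_coe_eq_R2_coe_iff.2 (.inr rfl)

lemma coe_ne_coe_neg_two_sub {w : ℂ} (hw : w ≠ -1) :
    (w : OnePoint ℂ) ≠ ((-2 - w : ℂ) : OnePoint ℂ) := by
  rw [Ne, OnePoint.coe_eq_coe]
  exact fun h => hw (by linear_combination h / 2)

lemma isCriticalPt_R2_neg_one : IsCriticalPt R2 ((-1 : ℂ) : OnePoint ℂ) := by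
  have hy : Tendsto (fun w : ℂ => -2 - w) (𝓝 (-1)) (𝓝 (-1)) := by
    convert (continuous_sub_left (-2 : ℂ)).tendsto (-1) using 2
    norm_num
  refine isCriticalPt_of_tendsto (l := 𝓝[≠] (-1 : ℂ)) ?_ ?_
    (eventually_nhdsWithin_of_forall fun _ => coe_ne_coe_neg_two_sub) R2_neg_two_sub
  · exact (continuous_coe.tendsto _).mono_left nhdsWithin_le_nhds
  · exact (continuous_coe.tendsto _).comp (hy.mono_left nhdsWithin_le_nhds)

lemma isCriticalPt_R2_infty : IsCriticalPt R2 ∞ :=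
  isCriticalPt_of_tendsto OnePoint.tendsto_coe_cobounded
    (OnePoint.tendsto_coe_cobounded.comp (tendsto_const_sub_cobounded (-2)))
    ((eventually_ne_cobounded (-1)).mono fun _ => coe_ne_coe_neg_two_sub) R2_neg_two_sub

lemma not_isCriticalPt_R2_coe {c : ℂ} (hc : c ≠ -1) : ¬ IsCriticalPt R2 c := by
  rw [IsCriticalPt, not_not]
  refine ⟨(↑) '' Metric.ball c (dist c (-1)), ?_, ?_⟩
  · rw [OnePoint.nhds_coe_eq]
    exact image_mem_map (Metric.ball_mem_nhds c (dist_pos.2 hc))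
  rintro _ ⟨w, hw, rfl⟩ _ ⟨u, hu, rfl⟩ h
  rcases R2_coe_eq_R2_coe_iff.1 h with rfl | rfl
  · rfl
  have hmid := convex_ball c (dist c (-1)) hw hu (by norm_num : (0 : ℝ) ≤ 1 / 2)
    (by norm_num : (0 : ℝ) ≤ 1 / 2) (by norm_num)
  have : (1 / 2 : ℝ) • w + (1 / 2 : ℝ) • (-2 - w) = -1 := by
    simp only [Complex.real_smul]; push_cast; ring
  rw [this, Metric.mem_ball, dist_comm] at hmid
  exact absurd hmid (lt_irrefl _)

lemma setOf_isCriticalPt_R2 : {c | IsCriticalPt R2 c} = {((-1 : ℂ) : OnePoint ℂ), ∞} := by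
  ext c
  induction c using OnePoint.rec with
  | infty => simpa using isCriticalPt_R2_infty
  | coe w =>
    by_cases hw : w = -1
    · subst hw
      simpa using isCriticalPt_R2_neg_one
    · simp [hw, not_isCriticalPt_R2_coe hw]

lemma mapsTo_R2_postcritical :
    MapsTo R2 {((-2 : ℂ) : OnePoint ℂ), ∞, ((0 : ℂ) : OnePoint ℂ)}
      {((-2 : ℂ) : OnePoint ℂ), ∞, ((0 : ℂ) : OnePoint ℂ)} := by
  rintro _ (rfl | rfl | rfl) <;> simp [R2_neg_two, R2_infty, R2_zero]

lemma postcriticalSet_R2 :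
    postcriticalSet R2 = {((-2 : ℂ) : OnePoint ℂ), ∞, ((0 : ℂ) : OnePoint ℂ)} := by
  have hcrit (c) : IsCriticalPt R2 c ↔ c = ((-1 : ℂ) : OnePoint ℂ) ∨ c = ∞ :=
    Set.ext_iff.1 setOf_isCriticalPt_R2 c
  ext p
  constructor
  · rintro ⟨c, hc, k, hk, rfl⟩
    rcases (hcrit c).1 hc with rfl | rfl
    · exact iterate_mem_of_mapsTo mapsTo_R2_postcritical (by simp [R2_neg_one]) hk
    · exact iterate_mem_of_mapsTo mapsTo_R2_postcritical (by simp [R2_infty]) hk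
  · rintro (rfl | rfl | rfl)
    · exact ⟨_, isCriticalPt_R2_neg_one, 1, le_rfl, R2_neg_one⟩
    · exact ⟨∞, isCriticalPt_R2_infty, 2, by norm_num, by simp [R2_infty, R2_zero]⟩
    · exact ⟨∞, isCriticalPt_R2_infty, 1, le_rfl, R2_infty⟩

theorem stmt_6 :
    {c | IsCriticalPt R2 c} = {((-1 : ℂ) : OnePoint ℂ), ∞} ∧
    R2 ((-1 : ℂ) : OnePoint ℂ) = ((-2 : ℂ) : OnePoint ℂ) ∧
    R2 ((-2 : ℂ) : OnePoint ℂ) = ∞ ∧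
    R2 ∞ = ((0 : ℂ) : OnePoint ℂ) ∧
    R2 ((0 : ℂ) : OnePoint ℂ) = ∞ ∧
    {p | ∃ c, IsCriticalPt R2 c ∧ ∃ k, 1 ≤ k ∧ R2^[k] c = p} =
      {((-2 : ℂ) : OnePoint ℂ), ∞, ((0 : ℂ) : OnePoint ℂ)} :=
  ⟨setOf_isCriticalPt_R2, R2_neg_one, R2_neg_two, R2_infty, R2_zero, postcriticalSet_R2⟩
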